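/- Let μ1, μ2, μ3 > 0, ρ > 0 and 0 < r2 < 1 be real numbers. Define g : (0,∞)⁴ → ℝ by g(w, x, x', y) = 1[w ≤ ρ]·(1[x ≥ ρ] + 1[x < ρ]·1[x' > x])·r2·(x' + y). Then the 4-fold Lebesgue integral ∫₀^∞∫₀^∞∫₀^∞∫₀^∞ g(w, x, x', y)·(1/μ1)·exp(−w/μ1)·(1/μ1)·exp(−x/μ1)·(1/μ2)·exp(−x'/μ2)·(1/μ3)·exp(−y/μ3) dw dx dx' dy equals r2·(1 − exp(−ρ/μ1))·( exp(−ρ/μ1)·μ2 + μ2 + (ρ·μ1/(μ1+μ2))·exp(−ρ(μ1+μ2)/(μ1·μ2)) + (μ1²·μ2/(μ1+μ2)²)·exp(−ρ(μ1+μ2)/(μ1·μ2)) − μ1²·μ2/(μ1+μ2)² − ρ·exp(−ρ(μ1+μ2)/(μ1·μ2)) − μ2·exp(−ρ(μ1+μ2)/(μ1·μ2)) ) + r2·μ3·(1 − exp(−ρ/μ1))·( exp(−ρ/μ1) + 1 + (μ1/(μ1+μ2))·exp(−ρ(μ1+μ2)/(μ1·μ2)) − μ1/(μ1+μ2) − exp(−ρ/μ1)·exp(−ρ/μ2)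 ). (This is the expected per-round reward E[V_secondary] of the secondary (default) builder.) -/

import Mathlib

/-!
Integrate out one variable at a time, innermost first. The `w`-integral is
`P(W ≤ ρ) = 1 - e^{-ρ/μ₁}`. For fixed `x' ≥ 0` the `x`-integral is `P(X ≥ ρ) + P(X < min ρ x')`,
which leaves the weight `e^{-ρ/μ₁} + 1 - e^{-min ρ x'/μ₁}` on `x'`. Splitting the `x'`-integral at
`ρ`, the one new ingredient is `e^{-x/μ₁} · (density of mean μ₂) = μ₁/(μ₁+μ₂) · (density of mean
μ₁μ₂/(μ₁+μ₂))`, so every piece is a first moment of an exponential density over an interval. The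
result is affine in `y`, and the last integral replaces `y` by its mean `μ₃`.
-/

open MeasureTheory Set Filter Real Topology

namespace Flashback

noncomputable def expDensity (μ x : ℝ) : ℝ := 1 / μ * exp (-x / μ)

section ExpDensity

variable {μ : ℝ}

@[fun_prop]
theorem continuous_expDensity : Continuous (expDensity μ) := by
  unfold expDensity; fun_prop

theorem hasDerivAt_neg_exp_neg_div (x : ℝ) :
    HasDerivAt (fun x => -exp (-x / μ)) (expDensity μ x) x :=
  ((hasDerivAt_neg x).div_const μ).exp.neg.congr_deriv (by rw [expDensity]; ring)

theorem hasDerivAt_neg_add_mul_exp_neg_div (hμ : μ ≠ 0) (y x : ℝ) :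
    HasDerivAt (fun x => -((x + y + μ) * exp (-x / μ))) ((x + y) * expDensity μ x) x :=
  (((hasDerivAt_id x).add_const y).add_const μ |>.mul
    ((hasDerivAt_neg x).div_const μ).exp).neg.congr_deriv
      (by rw [expDensity, id]; field_simp; ring)

theorem tendsto_add_mul_exp_neg_div_atTop (hμ : 0 < μ) (a : ℝ) :
    Tendsto (fun x => (x + a) * exp (-x / μ)) atTop (𝓝 0) := by
  have hdiv : Tendsto (fun x => x / μ) atTop atTop := tendsto_id.atTop_div_const hμ
  have hpow := ((tendsto_pow_mul_exp_neg_atTop_nhds_zero 1).comp hdiv).const_mul μ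
  have hexp := (tendsto_exp_neg_atTop_nhds_zero.comp hdiv).const_mul a
  convert hpow.add hexp using 1
  · ext x; simp only [Function.comp, pow_one, neg_div]; field_simp
  · simp

theorem integrableOn_expDensity_Ioi (hμ : 0 < μ) (c : ℝ) :
    IntegrableOn (expDensity μ) (Ioi c) := by
  refine IntegrableOn.congr_fun ((exp_neg_integrableOn_Ioi c (inv_pos.2 hμ)).const_mul (1 / μ))
    (fun x _ => ?_) measurableSet_Ioi
  rw [expDensity]; ring_nf

theorem integrableOn_mul_expDensity_Ioi (hμ : 0 < μ) (c : ℝ) :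
    IntegrableOn (fun x => x * expDensity μ x) (Ioi c) := by
  have hpos : IntegrableOn (fun x => (x + 0) * expDensity μ x) (Ioi 0) :=
    integrableOn_Ioi_deriv_of_nonneg' (fun x _ => hasDerivAt_neg_add_mul_exp_neg_div hμ.ne' 0 x)
      (fun x hx => by have := hx.out.le; rw [expDensity]; positivity)
      (by simpa using (tendsto_add_mul_exp_neg_div_atTop hμ (0 + μ)).neg)
  simp only [add_zero] at hpos
  refine ((by fun_prop : Continuous fun x => x * expDensity μ x).integrableOn_Icc
    (a := c) (b := 0) |>.union hpos).mono_set fun x hx => ?_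
  rcases le_or_gt x 0 with h | h
  exacts [Or.inl ⟨le_of_lt hx, h⟩, Or.inr h]

theorem integral_expDensity_Ioi (hμ : 0 < μ) (c : ℝ) :
    ∫ x in Ioi c, expDensity μ x = exp (-c / μ) := by
  rw [integral_Ioi_of_hasDerivAt_of_tendsto' (fun x _ => hasDerivAt_neg_exp_neg_div x)
    (integrableOn_expDensity_Ioi hμ c)
    (by simpa using (tendsto_exp_atBot.comp (tendsto_neg_atTop_atBot.atBot_div_const hμ)).neg)]
  ring

theorem integrableOn_add_mul_expDensity_Ioi (hμ : 0 < μ) (c y : ℝ) :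
    IntegrableOn (fun x => (x + y) * expDensity μ x) (Ioi c) :=
  ((integrableOn_mul_expDensity_Ioi hμ c).add
    ((integrableOn_expDensity_Ioi hμ c).const_mul y)).congr_fun
    (fun x _ => by simp only [Pi.add_apply]; ring) measurableSet_Ioi

theorem integral_add_mul_expDensity_Ioi (hμ : 0 < μ) (c y : ℝ) :
    ∫ x in Ioi c, (x + y) * expDensity μ x = (c + y + μ) * exp (-c / μ) := by
  rw [integral_Ioi_of_hasDerivAt_of_tendsto'
    (fun x _ => hasDerivAt_neg_add_mul_exp_neg_div hμ.ne' y x)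
    (integrableOn_add_mul_expDensity_Ioi hμ c y)
    (by simpa [add_assoc] using (tendsto_add_mul_exp_neg_div_atTop hμ (y + μ)).neg)]
  ring

theorem integral_expDensity_Ioc {a b : ℝ} (hab : a ≤ b) :
    ∫ x in Ioc a b, expDensity μ x = exp (-a / μ) - exp (-b / μ) := by
  rw [← intervalIntegral.integral_of_le hab, intervalIntegral.integral_eq_sub_of_hasDerivAt
    (fun x _ => hasDerivAt_neg_exp_neg_div x) (continuous_expDensity.intervalIntegrable a b)]
  ring

theorem integral_add_mul_expDensity_Ioc (hμ : μ ≠ 0) (y : ℝ) {a b : ℝ} (hab : a ≤ b) :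
    ∫ x in Ioc a b, (x + y) * expDensity μ x
      = (a + y + μ) * exp (-a / μ) - (b + y + μ) * exp (-b / μ) := by
  rw [← intervalIntegral.integral_of_le hab, intervalIntegral.integral_eq_sub_of_hasDerivAt
    (fun x _ => hasDerivAt_neg_add_mul_exp_neg_div hμ y x)
    ((by fun_prop : Continuous fun x => (x + y) * expDensity μ x).intervalIntegrable a b)]
  ring

theorem integral_boole_le_mul_expDensity {c : ℝ} (hc : 0 ≤ c) :
    ∫ x in Ioi 0, (if x ≤ c then 1 else 0) * expDensity μ x = 1 - exp (-c / μ) := by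
  have h : ∀ x, (if x ≤ c then 1 else 0) * expDensity μ x = (Iic c).indicator (expDensity μ) x :=
    fun x => by simp [indicator_apply]
  simp_rw [h]
  rw [setIntegral_indicator measurableSet_Iic, Ioi_inter_Iic, integral_expDensity_Ioc hc]
  simp

theorem integral_secondaryWins_mul_expDensity (hμ : 0 < μ) {ρ x' : ℝ} (hρ : 0 < ρ)
    (hx' : 0 ≤ x') :
    ∫ x in Ioi 0, ((if x ≥ ρ then 1 else 0) + (if x < ρ then 1 else 0) * (if x' > x then 1 else 0))
        * expDensity μ x
      = exp (-ρ / μ) + 1 - exp (-min ρ x' / μ) := by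
  have h : ∀ x, ((if x ≥ ρ then 1 else 0) + (if x < ρ then 1 else 0) * (if x' > x then 1 else 0))
        * expDensity μ x
      = (Ici ρ).indicator (expDensity μ) x + (Iio (min ρ x')).indicator (expDensity μ) x := by
    intro x
    rcases lt_or_ge x ρ with h1 | h1
    · by_cases h2 : x < x' <;> simp [h1, h2, h1.not_ge]
    · simp [h1, h1.not_gt]
  have hint := integrableOn_expDensity_Ioi hμ 0
  simp_rw [h]
  rw [integral_add (hint.indicator measurableSet_Ici) (hint.indicator measurableSet_Iio),
    setIntegral_indicator measurableSet_Ici, setIntegral_indicator measurableSet_Iio,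
    inter_eq_right.2 (Ici_subset_Ioi.2 hρ), integral_Ici_eq_integral_Ioi, Ioi_inter_Iio,
    ← integral_Ioc_eq_integral_Ioo, integral_expDensity_Ioi hμ,
    integral_expDensity_Ioc (le_min hρ.le hx'), neg_zero, zero_div, exp_zero]
  ring

theorem integral_add_mul_mul_expDensity_Ioi_zero (hμ : 0 < μ) (a b : ℝ) :
    ∫ y in Ioi 0, (a + b * y) * expDensity μ y = a + b * μ := by
  have h : ∀ y, (a + b * y) * expDensity μ y
      = a * expDensity μ y + b * ((y + 0) * expDensity μ y) := fun y => by ring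
  simp_rw [h]
  rw [integral_add ((integrableOn_expDensity_Ioi hμ 0).const_mul a)
    ((integrableOn_add_mul_expDensity_Ioi hμ 0 0).const_mul b), integral_const_mul,
    integral_const_mul, integral_expDensity_Ioi hμ, integral_add_mul_expDensity_Ioi hμ]
  simp

end ExpDensity

theorem exp_neg_div_mul_expDensity {μ₁ μ₂ : ℝ} (h₁ : 0 < μ₁) (h₂ : 0 < μ₂) (x : ℝ) :
    exp (-x / μ₁) * expDensity μ₂ x
      = μ₁ / (μ₁ + μ₂) * expDensity (μ₁ * μ₂ / (μ₁ + μ₂)) x := by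
  simp only [expDensity]
  rw [mul_left_comm, ← exp_add]
  field_simp
  ring_nf

theorem integral_secondaryWinProb_mul_add_mul_expDensity {μ₁ μ₂ ρ : ℝ} (h₁ : 0 < μ₁)
    (h₂ : 0 < μ₂) (hρ : 0 ≤ ρ) (y : ℝ) :
    ∫ x in Ioi 0, (exp (-ρ / μ₁) + 1 - exp (-min ρ x / μ₁)) * ((x + y) * expDensity μ₂ x)
      = ((exp (-ρ / μ₁) + 1) * μ₂
          - μ₁ / (μ₁ + μ₂) * (μ₁ * μ₂ / (μ₁ + μ₂)
            - (ρ + μ₁ * μ₂ / (μ₁ + μ₂)) * exp (-ρ / μ₁) * exp (-ρ / μ₂))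
          - (ρ + μ₂) * exp (-ρ / μ₁) * exp (-ρ / μ₂))
        + (exp (-ρ / μ₁) + 1 - μ₁ / (μ₁ + μ₂) * (1 - exp (-ρ / μ₁) * exp (-ρ / μ₂))
          - exp (-ρ / μ₁) * exp (-ρ / μ₂)) * y := by
  have hm : 0 < μ₁ * μ₂ / (μ₁ + μ₂) := by positivity
  have hE : exp (-ρ / (μ₁ * μ₂ / (μ₁ + μ₂))) = exp (-ρ / μ₁) * exp (-ρ / μ₂) := by
    rw [← exp_add]; congr 1; field_simp; ring
  have hcont : Continuous fun x => (x + y) * expDensity μ₂ x := by fun_prop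
  have hcont' : Continuous fun x => (x + y) * expDensity (μ₁ * μ₂ / (μ₁ + μ₂)) x := by fun_prop
  have on_Ioc : ∫ x in Ioc 0 ρ,
      (exp (-ρ / μ₁) + 1 - exp (-min ρ x / μ₁)) * ((x + y) * expDensity μ₂ x)
      = ∫ x in Ioc 0 ρ, ((exp (-ρ / μ₁) + 1) * ((x + y) * expDensity μ₂ x)
          - μ₁ / (μ₁ + μ₂) * ((x + y) * expDensity (μ₁ * μ₂ / (μ₁ + μ₂)) x)) :=
    setIntegral_congr_fun measurableSet_Ioc fun x hx => by
      rw [min_eq_right hx.2]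
      linear_combination -(x + y) * exp_neg_div_mul_expDensity h₁ h₂ x
  have on_Ioi : ∫ x in Ioi ρ,
      (exp (-ρ / μ₁) + 1 - exp (-min ρ x / μ₁)) * ((x + y) * expDensity μ₂ x)
      = ∫ x in Ioi ρ, (x + y) * expDensity μ₂ x :=
    setIntegral_congr_fun measurableSet_Ioi fun x hx => by
      rw [min_eq_left hx.out.le]; ring
  rw [← Ioc_union_Ioi_eq_Ioi hρ, setIntegral_union (Ioc_disjoint_Ioi le_rfl) measurableSet_Ioi
    (by fun_prop : Continuous _).integrableOn_Ioc
    ((integrableOn_add_mul_expDensity_Ioi h₂ ρ y).congr_fun (fun x hx => ?_) measurableSet_Ioi),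
    on_Ioc, on_Ioi, integral_sub (hcont.integrableOn_Ioc.const_mul _)
    (hcont'.integrableOn_Ioc.const_mul _), integral_const_mul, integral_const_mul,
    integral_add_mul_expDensity_Ioc h₂.ne' y hρ, integral_add_mul_expDensity_Ioc hm.ne' y hρ,
    integral_add_mul_expDensity_Ioi h₂ ρ y]
  · simp only [hE, neg_zero, zero_div, exp_zero]
    field_simp
    ring
  · rw [min_eq_left hx.out.le]; ring

end Flashback

open Flashback

theorem flashback_secondary_builder_reward_general
    (μ1 μ2 μ3 ρ r2 : ℝ) (hμ1 : 0 < μ1) (hμ2 : 0 < μ2) (hμ3 : 0 < μ3)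
    (hρ : 0 < ρ) :
    (∫ y in Set.Ioi (0:ℝ), ∫ x' in Set.Ioi (0:ℝ), ∫ x in Set.Ioi (0:ℝ),
      ∫ w in Set.Ioi (0:ℝ),
        ((if w ≤ ρ then (1:ℝ) else 0) *
            ((if x ≥ ρ then (1:ℝ) else 0)
              + (if x < ρ then (1:ℝ) else 0) * (if x' > x then (1:ℝ) else 0)) *
            (r2 * (x' + y))) *
        ((1 / μ1) * Real.exp (-w / μ1)) * ((1 / μ1) * Real.exp (-x / μ1)) *
        ((1 / μ2) * Real.exp (-x' / μ2)) * ((1 / μ3) * Real.exp (-y / μ3)))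
    = r2 * (1 - Real.exp (-ρ / μ1)) *
        (Real.exp (-ρ / μ1) * μ2 + μ2
          + (ρ * μ1 / (μ1 + μ2)) * Real.exp (-ρ * (μ1 + μ2) / (μ1 * μ2))
          + (μ1 ^ 2 * μ2 / (μ1 + μ2) ^ 2) * Real.exp (-ρ * (μ1 + μ2) / (μ1 * μ2))
          - μ1 ^ 2 * μ2 / (μ1 + μ2) ^ 2
          - ρ * Real.exp (-ρ * (μ1 + μ2) / (μ1 * μ2))
          - μ2 * Real.exp (-ρ * (μ1 + μ2) / (μ1 * μ2)))
      + r2 * μ3 * (1 - Real.exp (-ρ / μ1)) *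
          (Real.exp (-ρ / μ1) + 1
            + (μ1 / (μ1 + μ2)) * Real.exp (-ρ * (μ1 + μ2) / (μ1 * μ2))
            - μ1 / (μ1 + μ2)
            - Real.exp (-ρ / μ1) * Real.exp (-ρ / μ2)) := by
  calc _ = ∫ y in Ioi 0, ∫ x' in Ioi 0, ∫ x in Ioi 0,
          (∫ w in Ioi 0, (if w ≤ ρ then 1 else 0) * expDensity μ1 w) *
            (r2 * (((if x ≥ ρ then 1 else 0) + (if x < ρ then 1 else 0) * (if x' > x then 1 else 0))
              * expDensity μ1 x * ((x' + y) * expDensity μ2 x') * expDensity μ3 y)) := by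
        simp only [← integral_mul_const]
        congr! 8 with y x' x w
        simp only [expDensity]
        ring
    _ = (1 - exp (-ρ / μ1)) * (r2 * ∫ y in Ioi 0,
          (∫ x' in Ioi 0,
            (exp (-ρ / μ1) + 1 - exp (-min ρ x' / μ1)) * ((x' + y) * expDensity μ2 x'))
          * expDensity μ3 y) := by
        simp only [integral_boole_le_mul_expDensity hρ.le, integral_const_mul, integral_mul_const]
        congr 2
        refine setIntegral_congr_fun measurableSet_Ioi fun y _ => congrArg (· * expDensity μ3 y)
          (setIntegral_congr_fun measurableSet_Ioi fun x' hx' => ?_)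
        rw [integral_secondaryWins_mul_expDensity hμ1 hρ hx'.out.le]
    _ = _ := by
        simp only [integral_secondaryWinProb_mul_add_mul_expDensity hμ1 hμ2 hρ.le,
          integral_add_mul_mul_expDensity_Ioi_zero hμ3]
        rw [show -ρ * (μ1 + μ2) / (μ1 * μ2) = -ρ / μ1 + -ρ / μ2 by field_simp; ring, exp_add]
        field_simp
        ring

/-- Proposition 4 (secondary builder reward): the expectation of the secondary
(default) builder's per-round reward, written as a 4-fold Lebesgue integral
against the product of exponential densities (with means `μ1, μ1, μ2, μ3` for
`W, X, X', Y` respectively), equals the stated closed form. -/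
theorem flashback_secondary_builder_reward
    (μ1 μ2 μ3 ρ r2 : ℝ) (hμ1 : 0 < μ1) (hμ2 : 0 < μ2) (hμ3 : 0 < μ3)
    (hρ : 0 < ρ) (hr2_pos : 0 < r2) (hr2_lt : r2 < 1) :
    (∫ y in Set.Ioi (0:ℝ), ∫ x' in Set.Ioi (0:ℝ), ∫ x in Set.Ioi (0:ℝ),
      ∫ w in Set.Ioi (0:ℝ),
        ((if w ≤ ρ then (1:ℝ) else 0) *
            ((if x ≥ ρ then (1:ℝ) else 0)
              + (if x < ρ then (1:ℝ) else 0) * (if x' > x then (1:ℝ) else 0)) *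
            (r2 * (x' + y))) *
        ((1 / μ1) * Real.exp (-w / μ1)) * ((1 / μ1) * Real.exp (-x / μ1)) *
        ((1 / μ2) * Real.exp (-x' / μ2)) * ((1 / μ3) * Real.exp (-y / μ3)))
    = r2 * (1 - Real.exp (-ρ / μ1)) *
        (Real.exp (-ρ / μ1) * μ2 + μ2
          + (ρ * μ1 / (μ1 + μ2)) * Real.exp (-ρ * (μ1 + μ2) / (μ1 * μ2))
          + (μ1 ^ 2 * μ2 / (μ1 + μ2) ^ 2) * Real.exp (-ρ * (μ1 + μ2) / (μ1 * μ2))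
          - μ1 ^ 2 * μ2 / (μ1 + μ2) ^ 2
          - ρ * Real.exp (-ρ * (μ1 + μ2) / (μ1 * μ2))
          - μ2 * Real.exp (-ρ * (μ1 + μ2) / (μ1 * μ2)))
      + r2 * μ3 * (1 - Real.exp (-ρ / μ1)) *
          (Real.exp (-ρ / μ1) + 1
            + (μ1 / (μ1 + μ2)) * Real.exp (-ρ * (μ1 + μ2) / (μ1 * μ2))
            - μ1 / (μ1 + μ2)
            - Real.exp (-ρ / μ1) * Real.exp (-ρ / μ2)) :=
  flashback_secondary_builder_reward_general μ1 μ2 μ3 ρ r2 hμ1 hμ2 hμ3 hρ
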